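/- If H is an r-stable induced subgraph of G and the number of edges between H and the rest of G is at most r, then all edges between H and G \ H are redundant in G. -/

import Mathlib

open SimpleGraph

/-- The independence number of a graph. -/
noncomputable def indepNum {V : Type} (G : SimpleGraph V) : ℕ :=
  sSup {n : ℕ | ∃ s : Set V, s.Finite ∧ s.ncard = n ∧ ∀ a ∈ s, ∀ b ∈ s, ¬ G.Adj a b}

/-- The number of edges of a graph. -/
noncomputable def numEdges {V : Type} (G : SimpleGraph V) : ℕ := G.edgeSet.ncard

/-- The degree (valency) of a vertex. -/
noncomputable def deg {V : Type} (G : SimpleGraph V) (v : V) : ℕ := (G.neighborSet v).ncard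

/-- The second valency `d²(v) = ∑_{w ∈ N(v)} d(w)`. -/
noncomputable def secondDeg {V : Type} (G : SimpleGraph V) (v : V) : ℕ :=
  ∑ᶠ w ∈ G.neighborSet v, deg G w

/-- `p = (a,b,c,d)` is an (ordered) 4-cycle of `G`. -/
def IsC4 {V : Type} (G : SimpleGraph V) (p : V × V × V × V) : Prop :=
  G.Adj p.1 p.2.1 ∧ G.Adj p.2.1 p.2.2.1 ∧ G.Adj p.2.2.1 p.2.2.2 ∧
    G.Adj p.2.2.2 p.1 ∧ p.1 ≠ p.2.2.1 ∧ p.2.1 ≠ p.2.2.2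

/-- The number of 4-cycles of `G`; each 4-cycle yields 8 ordered tuples. -/
noncomputable def numC4 {V : Type} (G : SimpleGraph V) : ℕ :=
  {p : V × V × V × V | IsC4 G p}.ncard / 8

/-- The number of 4-cycles of `G` containing a vertex of `S`. -/
noncomputable def numC4Through {V : Type} (G : SimpleGraph V) (S : Set V) : ℕ :=
  {p : V × V × V × V | IsC4 G p ∧ (p.1 ∈ S ∨ p.2.1 ∈ S ∨ p.2.2.1 ∈ S ∨ p.2.2.2 ∈ S)}.ncard / 8

/-- The invariant `ν(G) = 3e(G) − 17n(G) + 35α(G) + N(C₄;G)`. -/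
noncomputable def nu {V : Type} (G : SimpleGraph V) : ℤ :=
  3 * (numEdges G : ℤ) - 17 * (Nat.card V : ℤ) + 35 * (_root_.indepNum G : ℤ) + (numC4 G : ℤ)

/-- The closed neighbourhood `N[v]`. -/
def closedNbhd {V : Type} (G : SimpleGraph V) (v : V) : Set V := insert v (G.neighborSet v)

/-- `S` destabilises `G` : removing `S` decreases the independence number. -/
def Destab {V : Type} (G : SimpleGraph V) (S : Set V) : Prop :=
  _root_.indepNum (G.induce Sᶜ) < _root_.indepNum G

/-- `G` is edge-critical (α-critical): removing any edge increases the independence number. -/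
def EdgeCritical {V : Type} (G : SimpleGraph V) : Prop :=
  ∀ e ∈ G.edgeSet, _root_.indepNum G < _root_.indepNum (G.deleteEdges {e})

/-!
Let `I` be a maximum independent set of `G - xy`. The only edge of `G` inside `I` can be `xy`, which
leaves `A`, so `I ∩ A` and `I \ A` are independent in `G`. The vertices of `A` with a neighbour
outside `A` are at most as many as the edges leaving `A`, hence at most `r`; by stability, deleting
them from `G[A]` leaves an independent set `J` with `|J| ≥ α(G[A]) ≥ |I ∩ A|`. As `J` sees no vertex
outside `A`, `J ∪ (I \ A)` is independent in `G`, so `α(G - xy) = |I| ≤ α(G)`.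
-/

variable {V W : Type}

theorem isIndepSet_iff_forall_not_adj {G : SimpleGraph V} {s : Set V} :
    G.IsIndepSet s ↔ ∀ a ∈ s, ∀ b ∈ s, ¬ G.Adj a b :=
  ⟨fun h _ ha _ hb hab => h ha hb hab.ne hab, fun h _ ha _ hb _ => h _ ha _ hb⟩

section IndepNum

variable [Finite V] {G H : SimpleGraph V} {s : Set V}

theorem indepNum_bddAbove (G : SimpleGraph V) :
    BddAbove {n : ℕ | ∃ s : Set V, s.Finite ∧ s.ncard = n ∧ ∀ a ∈ s, ∀ b ∈ s, ¬ G.Adj a b} :=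
  ⟨Nat.card V, by
    rintro n ⟨s, -, rfl, -⟩
    exact Set.ncard_le_card s⟩

theorem ncard_le_indepNum_of_isIndepSet (hs : G.IsIndepSet s) :
    s.ncard ≤ _root_.indepNum G :=
  le_csSup (indepNum_bddAbove G) ⟨s, s.toFinite, rfl, isIndepSet_iff_forall_not_adj.1 hs⟩

theorem exists_isIndepSet_ncard_eq_indepNum (G : SimpleGraph V) :
    ∃ s : Set V, G.IsIndepSet s ∧ s.ncard = _root_.indepNum G := by
  have hne : {n : ℕ | ∃ s : Set V, s.Finite ∧ s.ncard = n ∧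
      ∀ a ∈ s, ∀ b ∈ s, ¬ G.Adj a b}.Nonempty := ⟨0, ∅, Set.finite_empty, by simp, by simp⟩
  obtain ⟨s, -, hcard, hind⟩ := Nat.sSup_mem hne (indepNum_bddAbove G)
  exact ⟨s, isIndepSet_iff_forall_not_adj.2 hind, hcard⟩

theorem indepNum_anti (h : G ≤ H) : _root_.indepNum H ≤ _root_.indepNum G := by
  obtain ⟨s, hs, hcard⟩ := exists_isIndepSet_ncard_eq_indepNum H
  exact hcard ▸ ncard_le_indepNum_of_isIndepSet (hs.mono' fun _ _ hnadj hadj => hnadj (h hadj))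

end IndepNum

section Embedding

variable [Finite V] {G : SimpleGraph V} {H : SimpleGraph W} (f : H ↪g G)

theorem ncard_le_indepNum_of_subset_range {s : Set V} (hs : G.IsIndepSet s)
    (hsf : s ⊆ Set.range f) : s.ncard ≤ _root_.indepNum H := by
  have : Finite W := Finite.of_injective f f.injective
  rw [← Set.ncard_preimage_of_injective_subset_range f.injective hsf]
  exact ncard_le_indepNum_of_isIndepSet
    fun a ha b hb hab hadj => hs ha hb (f.injective.ne hab) (f.map_adj_iff.2 hadj)

theorem indepNum_add_ncard_le {B : Set V} (hB : G.IsIndepSet B)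
    (hdisj : Disjoint (Set.range f) B) (hnadj : ∀ w, ∀ b ∈ B, ¬ G.Adj (f w) b) :
    _root_.indepNum H + B.ncard ≤ _root_.indepNum G := by
  have : Finite W := Finite.of_injective f f.injective
  obtain ⟨J, hJ, hJcard⟩ := exists_isIndepSet_ncard_eq_indepNum H
  have hfJ : G.IsIndepSet (f '' J) :=
    f.injective.injOn.pairwise_image.2 fun _ ha _ hb hab hadj =>
      hJ ha hb hab (f.map_adj_iff.1 hadj)
  have hunion : G.IsIndepSet (f '' J ∪ B) := by
    refine Set.pairwise_union.2 ⟨hfJ, hB, ?_⟩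
    rintro _ ⟨w, -, rfl⟩ b hb -
    exact ⟨hnadj w b hb, fun hadj => hnadj w b hb hadj.symm⟩
  have hdisj' : Disjoint (f '' J) B := hdisj.mono_left (Set.image_subset_range f J)
  calc _root_.indepNum H + B.ncard = (f '' J ∪ B).ncard := by
        rw [Set.ncard_union_eq hdisj', Set.ncard_image_of_injective J f.injective, hJcard]
    _ ≤ _root_.indepNum G := ncard_le_indepNum_of_isIndepSet hunion

end Embedding

theorem isIndepSet_of_isIndepSet_deleteEdges {G : SimpleGraph V} {s : Set V} {e : Sym2 V}
    {x : V} (hs : (G.deleteEdges {e}).IsIndepSet s) (hxe : x ∈ e) (hxs : x ∉ s) :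
    G.IsIndepSet s := by
  intro a ha b hb hab hadj
  refine hs ha hb hab (G.deleteEdges_adj.2 ⟨hadj, fun he => ?_⟩)
  rcases Sym2.mem_iff.1 (Set.mem_singleton_iff.1 he ▸ hxe) with rfl | rfl
  exacts [hxs ha, hxs hb]

section Boundary

variable (G : SimpleGraph V) (A : Set V)

def edgeBoundary : Set (Sym2 V) :=
  {e | e ∈ G.edgeSet ∧ ∃ a ∈ A, ∃ b ∈ Aᶜ, e = s(a, b)}

def innerBoundary : Set A :=
  {a | ∃ b ∉ A, G.Adj a b}

theorem ncard_innerBoundary_le [Finite V] :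
    (innerBoundary G A).ncard ≤ (edgeBoundary G A).ncard := by
  have : ∀ a : A, ∃ b, a ∈ innerBoundary G A → b ∉ A ∧ G.Adj a b := fun a => by
    by_cases ha : a ∈ innerBoundary G A
    · obtain ⟨b, hb⟩ := ha
      exact ⟨b, fun _ => hb⟩
    · exact ⟨a, fun h => absurd h ha⟩
  choose out hout using this
  refine Set.ncard_le_ncard_of_injOn (fun a => s((a : V), out a)) ?_ ?_ (Set.toFinite _)
  · intro a ha
    exact ⟨(hout a ha).2, a, a.2, out a, (hout a ha).1, rfl⟩
  · intro a ha a' ha' he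
    rcases Sym2.eq_iff.1 he with ⟨h, -⟩ | ⟨h, -⟩
    · exact Subtype.ext h
    · exact absurd (h ▸ a.2) (hout a' ha').1

end Boundary

theorem ncard_le_indepNum_of_not_destab_innerBoundary [Finite V] {G : SimpleGraph V} {A : Set V}
    (hA : ¬ Destab (G.induce A) (innerBoundary G A)) {I : Set V}
    (hIA : G.IsIndepSet (I ∩ A)) (hIA' : G.IsIndepSet (I \ A)) :
    I.ncard ≤ _root_.indepNum G := by
  let f : (G.induce A).induce (innerBoundary G A)ᶜ ↪g G :=
    (Embedding.induce A).comp (Embedding.induce _)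
  have hinside : (I ∩ A).ncard ≤ _root_.indepNum ((G.induce A).induce (innerBoundary G A)ᶜ) :=
    calc (I ∩ A).ncard ≤ _root_.indepNum (G.induce A) :=
          ncard_le_indepNum_of_subset_range (Embedding.induce A) hIA fun v hv => ⟨⟨v, hv.2⟩, rfl⟩
      _ ≤ _ := not_lt.1 hA
  have houtside : _ + (I \ A).ncard ≤ _ := indepNum_add_ncard_le f hIA'
    (Set.disjoint_left.2 fun _ ⟨w, hw⟩ hv => hv.2 (hw ▸ w.1.2))
    (fun w b hb hadj => w.2 ⟨b, hb.2, hadj⟩)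
  calc I.ncard = (I ∩ A).ncard + (I \ A).ncard :=
        (Set.ncard_inter_add_ncard_sdiff_eq_ncard I A).symm
    _ ≤ _ := Nat.add_le_add_right hinside _
    _ ≤ _ := houtside

theorem stmt7_general {V : Type} [Fintype V] (G : SimpleGraph V) (A : Set V) (r : ℕ)
    (hstable : ∀ T : Set ↥A, T.ncard ≤ r → ¬ Destab (G.induce A) T)
    (hcount : {e : Sym2 V | e ∈ G.edgeSet ∧ ∃ a ∈ A, ∃ b ∈ Aᶜ, e = s(a, b)}.ncard ≤ r)
    (x y : V) (hx : x ∈ A) (hy : y ∉ A) :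
    _root_.indepNum (G.deleteEdges {s(x, y)}) = _root_.indepNum G := by
  refine le_antisymm ?_ (indepNum_anti (G.deleteEdges_le _))
  obtain ⟨I, hI, hIcard⟩ := exists_isIndepSet_ncard_eq_indepNum (G.deleteEdges {s(x, y)})
  have hA : ¬ Destab (G.induce A) (innerBoundary G A) :=
    hstable _ ((ncard_innerBoundary_le G A).trans hcount)
  rw [← hIcard]
  exact ncard_le_indepNum_of_not_destab_innerBoundary hA
    (isIndepSet_of_isIndepSet_deleteEdges (hI.mono Set.inter_subset_left)
      (Sym2.mem_mk_right x y) fun h => hy h.2)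
    (isIndepSet_of_isIndepSet_deleteEdges (hI.mono Set.sdiff_subset)
      (Sym2.mem_mk_left x y) fun h => h.2 hx)

/-- If `H = G[A]` is `r`-stable and at most `r` edges of `G` join `A` to its complement,
then all such edges are redundant in `G`. -/
theorem stmt7 {V : Type} [Fintype V] (G : SimpleGraph V) (A : Set V) (r : ℕ)
    (hstable : ∀ T : Set ↥A, T.ncard ≤ r → ¬ Destab (G.induce A) T)
    (hcount : {e : Sym2 V | e ∈ G.edgeSet ∧ ∃ a ∈ A, ∃ b ∈ Aᶜ, e = s(a, b)}.ncard ≤ r)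
    (x y : V) (hx : x ∈ A) (hy : y ∉ A) (hadj : G.Adj x y) :
    _root_.indepNum (G.deleteEdges {s(x, y)}) = _root_.indepNum G :=
  stmt7_general G A r hstable hcount x y hx hy
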